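/- Let φ = (1+√5)/2 and A(x,y,z) = (5−√5)yz⁵ + (5+√5)y⁵z − 20y³z³ + (10+10√5)x²yz³ + (10−10√5)x²y³z − 10x⁴yz. Define on ℝ³ ∖ {0} the functions ϖ(x,y,z) = A(x,y,z)/(x²+y²+z²)², ϱ(x,y,z) = A(y,z,x)/(x²+y²+z²)², σ(x,y,z) = A(z,x,y)/(x²+y²+z²)². Then the icosahedral vector field (ϖ, ϱ, σ) is solenoidal: for every (x,y,z) ≠ (0,0,0), ∂ϖ/∂x + ∂ϱ/∂y + ∂σ/∂z = 0. -/

import Mathlib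

/-!
Write `F = (A(x,y,z), A(y,z,x), A(z,x,y))` and `r² = x² + y² + z²`, so that the field is `F / r⁴`.
Then `div (F / r⁴) = div F / r⁴ - 4 (x·F) / r⁶`, and both `div F` and `x·F` vanish identically:
they are polynomial identities in which `√5` enters only as a parameter.
-/

/-- The numerator of the first component of the icosahedral superflow's vector field. -/
noncomputable def A (x y z : ℝ) : ℝ :=
  (5 - Real.sqrt 5) * y * z ^ 5 + (5 + Real.sqrt 5) * y ^ 5 * z - 20 * y ^ 3 * z ^ 3
    + (10 + 10 * Real.sqrt 5) * x ^ 2 * y * z ^ 3 + (10 - 10 * Real.sqrt 5) * x ^ 2 * y ^ 3 * z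
    - 10 * x ^ 4 * y * z

/-- First component `ϖ` of the icosahedral vector field. -/
noncomputable def varpi (x y z : ℝ) : ℝ := A x y z / (x ^ 2 + y ^ 2 + z ^ 2) ^ 2

/-- Second component `ϱ` of the icosahedral vector field. -/
noncomputable def varrho (x y z : ℝ) : ℝ := A y z x / (x ^ 2 + y ^ 2 + z ^ 2) ^ 2

/-- Third component `σ` of the icosahedral vector field. -/
noncomputable def sigmaC (x y z : ℝ) : ℝ := A z x y / (x ^ 2 + y ^ 2 + z ^ 2) ^ 2

noncomputable def dA (x y z : ℝ) : ℝ :=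
  (20 + 20 * Real.sqrt 5) * x * y * z ^ 3 + (20 - 20 * Real.sqrt 5) * x * y ^ 3 * z
    - 40 * x ^ 3 * y * z

lemma hasDerivAt_A (x y z : ℝ) : HasDerivAt (fun s => A s y z) (dA x y z) x := by
  have hA : (fun s => A s y z) = fun s =>
      ((5 - Real.sqrt 5) * y * z ^ 5 + (5 + Real.sqrt 5) * y ^ 5 * z - 20 * y ^ 3 * z ^ 3)
        + (((10 + 10 * Real.sqrt 5) * y * z ^ 3 + (10 - 10 * Real.sqrt 5) * y ^ 3 * z) * s ^ 2
          - 10 * y * z * s ^ 4) := by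
    funext s; unfold A; ring
  rw [hA]
  refine ((((hasDerivAt_pow 2 x).const_mul _).sub
    ((hasDerivAt_pow 4 x).const_mul _)).const_add _).congr_deriv ?_
  unfold dA; norm_num; ring

lemma dA_cyclic_sum_eq_zero (x y z : ℝ) : dA x y z + dA y z x + dA z x y = 0 := by
  unfold dA; ring

lemma mul_A_cyclic_sum_eq_zero (x y z : ℝ) :
    x * A x y z + y * A y z x + z * A z x y = 0 := by
  unfold A; ring

lemma HasDerivAt.div_sq_add_sq {f : ℝ → ℝ} {f' t c : ℝ} (hf : HasDerivAt f f' t)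
    (hc : t ^ 2 + c ≠ 0) :
    HasDerivAt (fun s => f s / (s ^ 2 + c) ^ 2)
      ((f' * (t ^ 2 + c) - 4 * t * f t) / (t ^ 2 + c) ^ 3) t := by
  refine (hf.div (((hasDerivAt_pow 2 t).add_const c).fun_pow 2) (pow_ne_zero 2 hc)).congr_deriv ?_
  field_simp
  norm_num
  ring

lemma deriv_varpi {x y z : ℝ} (hr : x ^ 2 + y ^ 2 + z ^ 2 ≠ 0) :
    deriv (fun s => varpi s y z) x
      = (dA x y z * (x ^ 2 + y ^ 2 + z ^ 2) - 4 * x * A x y z) / (x ^ 2 + y ^ 2 + z ^ 2) ^ 3 := by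
  rw [add_assoc] at hr ⊢
  simp only [varpi, add_assoc]
  exact ((hasDerivAt_A x y z).div_sq_add_sq hr).deriv

lemma varrho_eq_varpi (x y z : ℝ) : varrho x y z = varpi y z x := by
  unfold varrho varpi; ring

lemma sigmaC_eq_varpi (x y z : ℝ) : sigmaC x y z = varpi z x y := by
  unfold sigmaC varpi; ring

lemma sq_add_sq_add_sq_ne_zero {x y z : ℝ} (h : (x, y, z) ≠ (0, 0, 0)) :
    x ^ 2 + y ^ 2 + z ^ 2 ≠ 0 := by
  contrapose! h
  simp only [Prod.mk.injEq]
  refine ⟨?_, ?_, ?_⟩ <;> nlinarith [sq_nonneg x, sq_nonneg y, sq_nonneg z]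

/-- The icosahedral vector field `(ϖ, ϱ, σ)` is solenoidal on `ℝ³ ∖ {0}`:
`∂ϖ/∂x + ∂ϱ/∂y + ∂σ/∂z = 0`. -/
theorem stmt2 (x y z : ℝ) (h : (x, y, z) ≠ (0, 0, 0)) :
    deriv (fun s => varpi s y z) x + deriv (fun s => varrho x s z) y
      + deriv (fun s => sigmaC x y s) z = 0 := by
  have hr := sq_add_sq_add_sq_ne_zero h
  have hyzx : y ^ 2 + z ^ 2 + x ^ 2 = x ^ 2 + y ^ 2 + z ^ 2 := by ring
  have hzxy : z ^ 2 + x ^ 2 + y ^ 2 = x ^ 2 + y ^ 2 + z ^ 2 := by ring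
  simp only [varrho_eq_varpi, sigmaC_eq_varpi]
  rw [deriv_varpi hr, deriv_varpi (hyzx ▸ hr), deriv_varpi (hzxy ▸ hr), hyzx, hzxy,
    ← add_div, ← add_div, div_eq_zero_iff]
  left
  linear_combination (x ^ 2 + y ^ 2 + z ^ 2) * dA_cyclic_sum_eq_zero x y z
    - 4 * mul_A_cyclic_sum_eq_zero x y z
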